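/- Let s: ℝⁿ → ℝ be a function satisfying the lower prox-regularity bound s(x) − s(x⁺) ≥ ⟨g, x − x⁺⟩ − (M/2)‖x − x⁺‖² for some g ∈ ∂s(x⁺) and M > 0, and let Φ ∈ ℝ^{r×n} have δ₊(ΦᵀΦ) > 0. Suppose x⁺ minimizes x ↦ s(x) + ⟨η, Φx⟩ + (γ/2)‖Φx − c‖², so that 0 ∈ ∂s(x⁺) + Φᵀη + γΦᵀ(Φx⁺ − c). Then for all x: s(x) + ⟨η, Φx⟩ + (γ/2)‖Φx − c‖² − [s(x⁺) + ⟨η, Φx⁺⟩ + (γ/2)‖Φx⁺ − c‖²] ≥ ((γδ₊(ΦᵀΦ) − M)/2)‖x − x⁺‖². In particular the decrease is strictly positive for x ≠ x⁺ whenever γ > M/δ₊(ΦᵀΦ). -/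

import Mathlib

/-!
Write `d = x - x⁺`. The quadratic penalty expands around `Φ x⁺ - c`, and the optimality
condition `g + Φᵀ (η + γ (Φ x⁺ - c)) = 0` makes every term linear in `d` cancel against the
linear term `⟨g, d⟩` of the prox-regularity bound. What is left is
`(γ/2) ‖Φ d‖² - (M/2) ‖d‖²`, and `‖Φ d‖² ≥ δ ‖d‖²` finishes the proof.
-/

open Matrix

section DotProduct

variable {m k R : Type*} [Fintype m] [Fintype k]

theorem dotProduct_self_sub_dotProduct_self [CommRing R] (a b : m → R) :
    a ⬝ᵥ a - b ⬝ᵥ b = 2 * (b ⬝ᵥ (a - b)) + (a - b) ⬝ᵥ (a - b) := by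
  simp only [dotProduct_sub, sub_dotProduct, dotProduct_comm a b]
  ring

theorem dotProduct_add_dotProduct_mulVec_eq_zero [CommRing R] {A : Matrix k m R}
    {g : m → R} {u : k → R} (h : g + Aᵀ *ᵥ u = 0) (d : m → R) :
    g ⬝ᵥ d + u ⬝ᵥ (A *ᵥ d) = 0 := by
  rw [← dotProduct_transpose_mulVec, dotProduct_comm g, ← dotProduct_add, h, dotProduct_zero]

theorem dotProduct_transpose_mul_self_mulVec [CommRing R] (A : Matrix k m R) (v : m → R) :
    v ⬝ᵥ ((Aᵀ * A) *ᵥ v) = (A *ᵥ v) ⬝ᵥ (A *ᵥ v) := by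
  rw [← mulVec_mulVec, dotProduct_transpose_mulVec]

theorem dotProduct_self_pos_of_ne_zero [Ring R] [LinearOrder R] [IsStrictOrderedRing R]
    {v : m → R} (hv : v ≠ 0) : 0 < v ⬝ᵥ v :=
  lt_of_le_of_ne (Fintype.sum_nonneg fun i => mul_self_nonneg (v i))
    (Ne.symm (dotProduct_self_eq_zero.not.mpr hv))

end DotProduct

theorem penalized_objective_sub_ge {m k : Type*} [Fintype m] [Fintype k] (s : (m → ℝ) → ℝ)
    (Φ : Matrix k m ℝ) (c η : k → ℝ) (xplus g : m → ℝ) (M γ δΦ : ℝ) (hγ : 0 ≤ γ)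
    (hδ : ∀ v : m → ℝ, δΦ * (v ⬝ᵥ v) ≤ v ⬝ᵥ ((Φᵀ * Φ) *ᵥ v))
    (hprox : ∀ x, s x - s xplus ≥ g ⬝ᵥ (x - xplus) - M/2 * ((x - xplus) ⬝ᵥ (x - xplus)))
    (hstat : g + Φᵀ *ᵥ η + γ • (Φᵀ *ᵥ (Φ *ᵥ xplus - c)) = 0) (x : m → ℝ) :
    s x + η ⬝ᵥ (Φ *ᵥ x) + γ/2 * ((Φ *ᵥ x - c) ⬝ᵥ (Φ *ᵥ x - c))
        - (s xplus + η ⬝ᵥ (Φ *ᵥ xplus) + γ/2 * ((Φ *ᵥ xplus - c) ⬝ᵥ (Φ *ᵥ xplus - c)))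
      ≥ (γ * δΦ - M)/2 * ((x - xplus) ⬝ᵥ (x - xplus)) := by
  set d := x - xplus
  have hΦd : (Φ *ᵥ x - c) - (Φ *ᵥ xplus - c) = Φ *ᵥ d := by
    rw [mulVec_sub]
    abel
  have hpenalty := dotProduct_self_sub_dotProduct_self (Φ *ᵥ x - c) (Φ *ᵥ xplus - c)
  rw [hΦd] at hpenalty
  have hlinear : η ⬝ᵥ (Φ *ᵥ x) - η ⬝ᵥ (Φ *ᵥ xplus) = η ⬝ᵥ (Φ *ᵥ d) := by
    rw [← dotProduct_sub, ← mulVec_sub]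
  have hstat' : g + Φᵀ *ᵥ (η + γ • (Φ *ᵥ xplus - c)) = 0 := by
    rw [mulVec_add, mulVec_smul, ← add_assoc, hstat]
  have hcancel := dotProduct_add_dotProduct_mulVec_eq_zero hstat' d
  rw [add_dotProduct, smul_dotProduct, smul_eq_mul] at hcancel
  have hcurv : γ * (δΦ * (d ⬝ᵥ d)) ≤ γ * ((Φ *ᵥ d) ⬝ᵥ (Φ *ᵥ d)) := by
    rw [← dotProduct_transpose_mul_self_mulVec]
    exact mul_le_mul_of_nonneg_left (hδ d) hγ
  linear_combination hprox x - (γ / 2) * hpenalty - hcancel + hcurv / 2 - hlinear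

theorem stmt12_general {n r : ℕ} (s : (Fin n → ℝ) → ℝ)
    (Φ : Matrix (Fin r) (Fin n) ℝ) (c η : Fin r → ℝ)
    (xplus g : Fin n → ℝ) (M γ δΦ : ℝ) (hγ : 0 < γ) (hδΦ : 0 < δΦ)
    (hδ : ∀ v : Fin n → ℝ, δΦ * (v ⬝ᵥ v) ≤ v ⬝ᵥ ((Φᵀ * Φ) *ᵥ v))
    (hprox : ∀ x, s x - s xplus ≥ g ⬝ᵥ (x - xplus) - M/2 * ((x - xplus) ⬝ᵥ (x - xplus)))
    (hstat : g + Φᵀ *ᵥ η + γ • (Φᵀ *ᵥ (Φ *ᵥ xplus - c)) = 0)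
    (L : (Fin n → ℝ) → ℝ)
    (hL : ∀ x, L x = s x + η ⬝ᵥ (Φ *ᵥ x) + γ/2 * ((Φ *ᵥ x - c) ⬝ᵥ (Φ *ᵥ x - c))) :
    (∀ x, L x - L xplus ≥ (γ * δΦ - M)/2 * ((x - xplus) ⬝ᵥ (x - xplus))) ∧
    (M / δΦ < γ → ∀ x, x ≠ xplus → 0 < L x - L xplus) := by
  have hdescent : ∀ x, L x - L xplus ≥ (γ * δΦ - M)/2 * ((x - xplus) ⬝ᵥ (x - xplus)) := by
    intro x
    rw [hL, hL]
    exact penalized_objective_sub_ge s Φ c η xplus g M γ δΦ hγ.le hδ hprox hstat x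
  refine ⟨hdescent, fun hγδ x hx => ?_⟩
  have hcoef : 0 < (γ * δΦ - M)/2 := by
    rw [div_lt_iff₀ hδΦ] at hγδ
    linarith
  exact (mul_pos hcoef (dotProduct_self_pos_of_ne_zero (sub_ne_zero.mpr hx))).trans_le
    (hdescent x)

theorem stmt12 {n r : ℕ} (s : (Fin n → ℝ) → ℝ)
    (Φ : Matrix (Fin r) (Fin n) ℝ) (c η : Fin r → ℝ)
    (xplus g : Fin n → ℝ) (M γ δΦ : ℝ) (hM : 0 < M) (hγ : 0 < γ) (hδΦ : 0 < δΦ)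
    (hδ : ∀ v : Fin n → ℝ, δΦ * (v ⬝ᵥ v) ≤ v ⬝ᵥ ((Φᵀ * Φ) *ᵥ v))
    (hprox : ∀ x, s x - s xplus ≥ g ⬝ᵥ (x - xplus) - M/2 * ((x - xplus) ⬝ᵥ (x - xplus)))
    (hstat : g + Φᵀ *ᵥ η + γ • (Φᵀ *ᵥ (Φ *ᵥ xplus - c)) = 0)
    (L : (Fin n → ℝ) → ℝ)
    (hL : ∀ x, L x = s x + η ⬝ᵥ (Φ *ᵥ x) + γ/2 * ((Φ *ᵥ x - c) ⬝ᵥ (Φ *ᵥ x - c))) :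
    (∀ x, L x - L xplus ≥ (γ * δΦ - M)/2 * ((x - xplus) ⬝ᵥ (x - xplus))) ∧
    (M / δΦ < γ → ∀ x, x ≠ xplus → 0 < L x - L xplus) :=
  stmt12_general s Φ c η xplus g M γ δΦ hγ hδΦ hδ hprox hstat L hL
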